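/- arXiv:2405.18833 — 3 statements merged into one kernel-verified Lean document; each statement's English description precedes it below -/
import Mathlib

section
/- Let n ≥ 1 be an integer and set q = n⁴. The family of real numbers (√(q² + Δ²))_{Δ = 1, …, n²} is linearly independent over ℚ. -/
/-!
Write `n⁸ + Δ² = b_Δ² a_Δ` with `a_Δ` squarefree. These numbers lie strictly between the
consecutive squares `(n⁴)²` and `(n⁴ + 1)²`; if `b² a < c² a` were two of them, then
`a b > n⁴` and their difference would be at least `(2b + 1) a > 2 n⁴ + 1`. So the `a_Δ` are
distinct, and it suffices that square roots of distinct squarefree integers are linearly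
independent over `ℚ`.

For that, induct on a finite set `T` of primes, with `F_T = ℚ(√p : p ∈ T)`. Adjoining `√p`
gives `F_{T ∪ {p}} = F_T ⊕ F_T √p`, and if `(x + y √p)² ∈ F_T` then `x y = 0`; this shows
that `√d ∉ F_T` for squarefree `d` with a prime factor outside `T`. A relation among the `√d`
with prime factors in `T ∪ {p}` then reads `A + B √p = 0` with `A, B ∈ F_T`, so `A = B = 0`.
-/

namespace IntermediateField

variable {K L : Type*} [Field K] [Field L] [Algebra K L] (F : IntermediateField K L) {a : L}

theorem eq_zero_of_add_mul_eq_zero (ha : a ∉ F) {x y : L} (hx : x ∈ F) (hy : y ∈ F)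
    (h : x + y * a = 0) : x = 0 ∧ y = 0 := by
  obtain rfl | hy0 := eq_or_ne y 0
  · simpa using h
  refine absurd ?_ ha
  rw [show a = -x / y by field_simp; linear_combination h]
  exact div_mem (neg_mem hx) hy

def quadraticExt (ha2 : a ^ 2 ∈ F) (ha : a ∉ F) : IntermediateField K L where
  carrier := {w | ∃ x ∈ F, ∃ y ∈ F, x + y * a = w}
  zero_mem' := ⟨0, zero_mem F, 0, zero_mem F, by ring⟩
  one_mem' := ⟨1, one_mem F, 0, zero_mem F, by ring⟩
  algebraMap_mem' r := ⟨_, algebraMap_mem F r, 0, zero_mem F, by ring⟩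
  add_mem' := by
    rintro _ _ ⟨x, hx, y, hy, rfl⟩ ⟨x', hx', y', hy', rfl⟩
    exact ⟨x + x', add_mem hx hx', y + y', add_mem hy hy', by ring⟩
  mul_mem' := by
    rintro _ _ ⟨x, hx, y, hy, rfl⟩ ⟨x', hx', y', hy', rfl⟩
    refine ⟨x * x' + y * y' * a ^ 2, add_mem (mul_mem hx hx') (mul_mem (mul_mem hy hy') ha2),
      x * y' + y * x', add_mem (mul_mem hx hy') (mul_mem hy hx'), by ring⟩
  inv_mem' := by
    rintro _ ⟨x, hx, y, hy, rfl⟩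
    set D := x ^ 2 - y ^ 2 * a ^ 2
    have hD : D ∈ F := sub_mem (pow_mem hx 2) (mul_mem (pow_mem hy 2) ha2)
    have hconj : (x + y * a) * (x + -y * a) = D := by ring
    refine ⟨x / D, div_mem hx hD, -y / D, div_mem (neg_mem hy) hD, ?_⟩
    obtain hD0 | hD0 := eq_or_ne D 0
    · have hxy : x + y * a = 0 := by
        rcases mul_eq_zero.1 (hconj.trans hD0) with h | h
        · exact h
        · obtain ⟨rfl, hy0⟩ := eq_zero_of_add_mul_eq_zero F ha hx (neg_mem hy) h
          simp [neg_eq_zero.1 hy0]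
      simp [hD0, hxy]
    · refine eq_inv_of_mul_eq_one_left ?_
      calc (x / D + -y / D * a) * (x + y * a) = (x + y * a) * (x + -y * a) / D := by ring
        _ = 1 := by rw [hconj, div_self hD0]

theorem eq_zero_or_eq_zero_of_add_mul_sq_mem [NeZero (2 : L)] (ha2 : a ^ 2 ∈ F) (ha : a ∉ F)
    {x y : L} (hx : x ∈ F) (hy : y ∈ F) (h : (x + y * a) ^ 2 ∈ F) : x = 0 ∨ y = 0 := by
  have hcross : (x ^ 2 + y ^ 2 * a ^ 2 - (x + y * a) ^ 2) + (2 * x * y) * a = 0 := by ring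
  have := (eq_zero_of_add_mul_eq_zero F ha
    (sub_mem (add_mem (pow_mem hx 2) (mul_mem (pow_mem hy 2) ha2)) h)
    (mul_mem (mul_mem (ofNat_mem F 2) hx) hy) hcross).2
  simpa [two_ne_zero] using this

end IntermediateField

def Nat.squarefreeFactoredNumbers (T : Finset ℕ) : Set ℕ :=
  {d | Squarefree d ∧ d.primeFactors ⊆ T}

theorem Nat.squarefreeFactoredNumbers_insert_subset {p : ℕ} (hp : p.Prime) (T : Finset ℕ) :
    squarefreeFactoredNumbers (insert p T) ⊆
      squarefreeFactoredNumbers T ∪ (p * ·) '' squarefreeFactoredNumbers T := by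
  rintro d ⟨hd, hdT⟩
  by_cases hpd : p ∣ d
  · obtain ⟨e, rfl⟩ := hpd
    refine .inr ⟨e, ⟨hd.of_mul_right, fun q hq => ?_⟩, rfl⟩
    have hqp : q ≠ p := by
      rintro rfl
      exact hp.not_isUnit (hd q (mul_dvd_mul_left q (dvd_of_mem_primeFactors hq)))
    have hq' := hdT (primeFactors_mono (dvd_mul_left e p) hd.ne_zero hq)
    exact (Finset.mem_insert.1 hq').resolve_left hqp
  · refine .inl ⟨hd, fun q hq => (Finset.mem_insert.1 (hdT hq)).resolve_left ?_⟩
    rintro rfl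
    exact hpd (dvd_of_mem_primeFactors hq)

open Real IntermediateField

noncomputable def sqrtField (T : Finset ℕ) : IntermediateField ℚ ℝ :=
  adjoin ℚ ((fun p : ℕ => √(p : ℝ)) '' T)

theorem sq_sqrt_mem_sqrtField (T : Finset ℕ) (m : ℕ) : √(m : ℝ) ^ 2 ∈ sqrtField T := by
  rw [sq_sqrt (Nat.cast_nonneg m)]
  exact _root_.natCast_mem _ m

theorem sqrt_mem_sqrtField {T : Finset ℕ} {m : ℕ} (hm : m.primeFactors ⊆ T) :
    √(m : ℝ) ∈ sqrtField T := by
  induction m using Nat.recOnMul with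
  | zero => simp
  | one => simp
  | prime p hp => exact subset_adjoin _ _ ⟨p, hm (by simp [hp]), rfl⟩
  | mul a b iha ihb =>
    obtain rfl | ha := eq_or_ne a 0
    · simp
    obtain rfl | hb := eq_or_ne b 0
    · simp
    rw [Nat.primeFactors_mul ha hb, Finset.union_subset_iff] at hm
    rw [Nat.cast_mul, sqrt_mul (Nat.cast_nonneg _)]
    exact mul_mem (iha hm.1) (ihb hm.2)

theorem sqrtField_insert_le {T : Finset ℕ} {p : ℕ} (hp : √(p : ℝ) ∉ sqrtField T) :
    sqrtField (insert p T) ≤ quadraticExt (sqrtField T) (sq_sqrt_mem_sqrtField T p) hp := by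
  rw [sqrtField, adjoin_le_iff]
  rintro _ ⟨q, hq, rfl⟩
  obtain rfl | hq := Finset.mem_insert.1 hq
  · exact ⟨0, zero_mem _, 1, one_mem _, by ring⟩
  · exact ⟨√(q : ℝ), subset_adjoin _ _ ⟨q, hq, rfl⟩, 0, zero_mem _, by ring⟩

theorem sqrt_notMem_sqrtField {T : Finset ℕ} (hT : ∀ p ∈ T, p.Prime) {d : ℕ}
    (hd : Squarefree d) (hdT : ¬d.primeFactors ⊆ T) : √(d : ℝ) ∉ sqrtField T := by
  induction T using Finset.induction_on generalizing d with
  | empty =>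
    rw [sqrtField, Finset.coe_empty, Set.image_empty, adjoin_empty, mem_bot]
    refine irrational_sqrt_natCast_iff.2 ?_
    rintro ⟨k, rfl⟩
    obtain rfl := Nat.isUnit_iff.1 (hd k dvd_rfl)
    simp at hdT
  | insert p T hpT ih =>
    have hp := hT p (Finset.mem_insert_self p T)
    replace hT q hq := hT q (Finset.mem_insert_of_mem hq)
    have hpF : √(p : ℝ) ∉ sqrtField T := ih hT hp.squarefree (by simp [hp.primeFactors, hpT])
    intro hdF
    obtain ⟨x, hx, y, hy, hxy⟩ := sqrtField_insert_le hpF hdF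
    have hsq : (x + y * √(p : ℝ)) ^ 2 ∈ sqrtField T := hxy ▸ sq_sqrt_mem_sqrtField T d
    obtain rfl | rfl :=
      eq_zero_or_eq_zero_of_add_mul_sq_mem _ (sq_sqrt_mem_sqrtField T p) hpF hx hy hsq
    · -- `√d = y √p`: cancel `√p` if `p ∣ d`, otherwise `√(p d) = y p ∈ F_T`
      rw [zero_add] at hxy
      by_cases hpd : p ∣ d
      · obtain ⟨e, rfl⟩ := hpd
        refine ih hT hd.of_mul_right (fun he => hdT ?_) ?_
        · rw [Nat.primeFactors_mul hp.ne_zero (right_ne_zero_of_mul hd.ne_zero), hp.primeFactors,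
            ← Finset.insert_eq]
          exact Finset.insert_subset_insert p he
        · rw [Nat.cast_mul, sqrt_mul (Nat.cast_nonneg _), mul_comm] at hxy
          exact mul_left_cancel₀ (sqrt_ne_zero'.2 (Nat.cast_pos.2 hp.pos)) hxy ▸ hy
      · have hpd' : Squarefree (p * d) :=
          Nat.squarefree_mul_iff.2 ⟨(Nat.Prime.coprime_iff_not_dvd hp).2 hpd, hp.squarefree, hd⟩
        refine ih hT hpd' (fun h => hdT ?_) ?_
        · exact (Nat.primeFactors_mono (dvd_mul_left d p) hpd'.ne_zero).trans
            (h.trans (Finset.subset_insert p T))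
        · rw [Nat.cast_mul, sqrt_mul (Nat.cast_nonneg _), ← hxy,
            show √(p : ℝ) * (y * √p) = y * √p ^ 2 by ring]
          exact mul_mem hy (sq_sqrt_mem_sqrtField T p)
    · refine ih hT hd (fun h => hdT (h.trans (Finset.subset_insert p T))) ?_
      simpa [← hxy] using hx

theorem sqrt_prime_notMem_sqrtField {T : Finset ℕ} (hT : ∀ p ∈ T, p.Prime) {p : ℕ}
    (hp : p.Prime) (hpT : p ∉ T) : √(p : ℝ) ∉ sqrtField T :=
  sqrt_notMem_sqrtField hT hp.squarefree (by simp [hp.primeFactors, hpT])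

theorem linearIndepOn_sqrt_squarefreeFactoredNumbers {T : Finset ℕ} (hT : ∀ p ∈ T, p.Prime) :
    LinearIndepOn ℚ (fun d : ℕ => √(d : ℝ)) (Nat.squarefreeFactoredNumbers T) := by
  induction T using Finset.induction_on with
  | empty =>
    refine ((linearIndepOn_singleton_iff ℚ (v := fun d : ℕ => √(d : ℝ)) (i := 1)).2
      (by simp)).mono ?_
    rintro d ⟨hd, hdT⟩
    simpa [hd.ne_zero] using hdT
  | insert p T hpT ih =>
    have hp := hT p (Finset.mem_insert_self p T)
    replace hT q hq := hT q (Finset.mem_insert_of_mem hq)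
    have hpF := sqrt_prime_notMem_sqrtField hT hp hpT
    replace ih := ih hT
    set S := Nat.squarefreeFactoredNumbers T
    have hspan : Submodule.span ℚ ((fun d : ℕ => √(d : ℝ)) '' S) ≤
        (sqrtField T).toSubalgebra.toSubmodule :=
      Submodule.span_le.2 (Set.image_subset_iff.2 fun d hd => sqrt_mem_sqrtField hd.2)
    have hmul : (fun d : ℕ => √(d : ℝ)) ∘ (p * ·) =
        LinearMap.mulLeft ℚ √(p : ℝ) ∘ fun d : ℕ => √(d : ℝ) := by
      funext d
      simp [sqrt_mul (Nat.cast_nonneg _)]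
    refine (ih.union (.image_of_comp _ _ (hmul ▸ ih.map_injOn _ ?_)) ?_).mono
      (Nat.squarefreeFactoredNumbers_insert_subset hp T)
    · rw [← Set.image_comp, hmul, Set.image_comp, Submodule.span_image, Submodule.disjoint_def]
      rintro _ hx ⟨z, hz, rfl⟩
      refine (eq_zero_of_add_mul_eq_zero _ hpF (hspan hx) (neg_mem (hspan hz)) ?_).1
      simp only [LinearMap.mulLeft_apply]
      ring
    · exact fun x _ y _ h => mul_left_cancel₀ (sqrt_ne_zero'.2 (Nat.cast_pos.2 hp.pos)) h

theorem linearIndepOn_sqrt_squarefree :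
    LinearIndepOn ℚ (fun d : ℕ => √(d : ℝ)) {d | Squarefree d} := by
  refine linearIndepOn_of_finite _ fun t ht htfin => ?_
  refine (linearIndepOn_sqrt_squarefreeFactoredNumbers
    (T := htfin.toFinset.biUnion Nat.primeFactors) ?_).mono ?_
  · intro p hp
    obtain ⟨d, -, hpd⟩ := Finset.mem_biUnion.1 hp
    exact Nat.prime_of_mem_primeFactors hpd
  · exact fun d hd => ⟨ht hd, Finset.subset_biUnion_of_mem _ (htfin.mem_toFinset.2 hd)⟩

theorem linearIndependent_sqrt_sq_mul {ι : Type*} {a b : ι → ℕ} (ha : ∀ i, Squarefree (a i))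
    (hinj : Function.Injective a) (hb : ∀ i, b i ≠ 0) :
    LinearIndependent ℚ (fun i => √((b i ^ 2 * a i : ℕ) : ℝ)) := by
  have := (LinearIndependent.comp linearIndepOn_sqrt_squarefree (fun i => ⟨a i, ha i⟩)
    fun i j h => hinj (congrArg Subtype.val h)).units_smul
      fun i => Units.mk0 (b i : ℚ) (Nat.cast_ne_zero.2 (hb i))
  convert this using 1
  funext i
  simp [sqrt_mul, Rat.smul_def]

theorem Nat.eq_of_sq_mul_mem_Ioo_sq {M a b c : ℕ}
    (hb : b ^ 2 * a ∈ Set.Ioo (M ^ 2) ((M + 1) ^ 2))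
    (hc : c ^ 2 * a ∈ Set.Ioo (M ^ 2) ((M + 1) ^ 2)) : b = c := by
  have key : ∀ {b c : ℕ}, M ^ 2 < b ^ 2 * a → c ^ 2 * a < (M + 1) ^ 2 → c ≤ b := by
    intro b c hlo hhi
    by_contra! hbc
    have ha : 1 ≤ a := Nat.pos_of_ne_zero (by rintro rfl; simp at hlo)
    have hMba : M < b * a := by
      refine lt_of_pow_lt_pow_left₀ 2 (Nat.zero_le _) (hlo.trans_le ?_)
      rw [mul_pow]
      exact Nat.mul_le_mul_left _ (Nat.le_self_pow two_ne_zero a)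
    nlinarith [Nat.mul_le_mul_right a (Nat.pow_le_pow_left hbc 2)]
  exact le_antisymm (key hc.1 hb.2) (key hb.1 hc.2)

theorem stmt_6_general (n : ℕ) :
    LinearIndependent ℚ (fun d : Fin (n ^ 2) =>
      Real.sqrt (((n : ℝ) ^ 4) ^ 2 + (((d : ℕ) + 1 : ℕ) : ℝ) ^ 2)) := by
  set N : Fin (n ^ 2) → ℕ := fun d => (n ^ 4) ^ 2 + ((d : ℕ) + 1) ^ 2
  choose a b hN ha using fun d => Nat.sq_mul_squarefree (N d)
  have hNinj : Function.Injective N := fun i j h => Fin.ext (by simpa [N] using h)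
  have hNmem (d : Fin (n ^ 2)) : N d ∈ Set.Ioo ((n ^ 4) ^ 2) ((n ^ 4 + 1) ^ 2) := by
    have hd : ((d : ℕ) + 1) ^ 2 ≤ (n ^ 2) ^ 2 := Nat.pow_le_pow_left d.2 2
    refine ⟨Nat.lt_add_of_pos_right (by positivity), ?_⟩
    simp only [N]
    nlinarith
  have hainj : Function.Injective a := by
    intro i j h
    have hbij : b i = b j := Nat.eq_of_sq_mul_mem_Ioo_sq (hN i ▸ hNmem i) (h ▸ hN j ▸ hNmem j)
    exact hNinj (by rw [← hN i, ← hN j, h, hbij])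
  have hb (d : Fin (n ^ 2)) : b d ≠ 0 := by
    intro h
    have := (hNmem d).1
    rw [← hN d, h] at this
    simp at this
  convert linearIndependent_sqrt_sq_mul ha hainj hb with d
  rw [hN d]
  push_cast [N]
  ring

/-- For `q = n⁴`, the family `(√(q² + Δ²))_{Δ = 1, …, n²}` of real numbers is linearly
independent over `ℚ` (indexing `Δ = (d : Fin (n²)) + 1`). -/
theorem stmt_6 (n : ℕ) (hn : 1 ≤ n) :
    LinearIndependent ℚ (fun d : Fin (n ^ 2) =>
      Real.sqrt (((n : ℝ) ^ 4) ^ 2 + (((d : ℕ) + 1 : ℕ) : ℝ) ^ 2)) :=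
  stmt_6_general n
end

section
/- In Construction 1 with n ≥ 2, there exist two distinct bijections σ, τ from {0,…,n−1} to {1,…,n} whose weights differ by a positive amount of at most 1/(n−1)!: 0 < |Σ_{i=0}^{n−1} ‖u_i − v_{σ(i)}‖ − Σ_{i=0}^{n−1} ‖u_i − v_{τ(i)}‖| ≤ 1/(n−1)!. -/
/-!
Every edge `u_i v_{j+1}` has length `√(n⁸ + d²)` with `d = (j + 1) n - i ∈ [1, n²]`, so all weights
lie in `[n⁵, n⁵ + n/2]`, and pigeonhole over the `n!` matchings gives two weights at distance at
most `n / (2 (n! - 1)) ≤ 1/(n-1)!`. They differ because weights are injective: the integers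
`n⁸ + d²` are distinct for distinct edges and lie in `(N², N² + 2N]` with `N = n⁴`, where no two
distinct numbers have the same squarefree part. Equal weights would thus give a nontrivial
`ℚ`-linear relation between square roots of distinct squarefree integers, which are linearly
independent: along the tower `ℚ(√p₁, …, √pₖ)` one shows that `√s` stays outside it as long as
some prime outside `{p₁, …, pₖ}` divides `s` to an odd power.
-/

open scoped BigOperators

/-- A point of `ℝ²` from two coordinates. -/
noncomputable def mk2 (x y : ℝ) : EuclideanSpace ℝ (Fin 2) :=
  (WithLp.equiv 2 (Fin 2 → ℝ)).symm ![x, y]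

/-- Construction 1: the left-hand point `u_i = (0, i)`, for `0 ≤ i ≤ n-1`. -/
noncomputable def uPt (i : ℕ) : EuclideanSpace ℝ (Fin 2) := mk2 0 (i : ℝ)

/-- Construction 1: the right-hand point `v_j = (n⁴, j·n)`, for `1 ≤ j ≤ n`. -/
noncomputable def vPt (n j : ℕ) : EuclideanSpace ℝ (Fin 2) := mk2 ((n : ℝ) ^ 4) ((j : ℝ) * n)

/-- The weight of the perfect matching of Construction 1 that matches `u_i` with
`v_{σ(i)+1}`; as `σ` ranges over permutations of `Fin n`, `i ↦ σ(i)+1` ranges over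
all bijections from `{0,…,n-1}` to `{1,…,n}`. -/
noncomputable def matchWeight (n : ℕ) (σ : Equiv.Perm (Fin n)) : ℝ :=
  ∑ i : Fin n, ‖uPt (i : ℕ) - vPt n ((σ i : ℕ) + 1)‖

open scoped Nat

namespace Subfield

variable {F : Type*} [Field F]

def quadExt (K : Subfield F) (r : F) (hr : r ^ 2 ∈ K) : Subfield F where
  carrier := {x | ∃ a ∈ K, ∃ b ∈ K, x = a + b * r}
  zero_mem' := ⟨0, K.zero_mem, 0, K.zero_mem, by simp⟩
  one_mem' := ⟨1, K.one_mem, 0, K.zero_mem, by simp⟩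
  add_mem' := by
    rintro _ _ ⟨a, ha, b, hb, rfl⟩ ⟨c, hc, d, hd, rfl⟩
    exact ⟨a + c, K.add_mem ha hc, b + d, K.add_mem hb hd, by ring⟩
  neg_mem' := by
    rintro _ ⟨a, ha, b, hb, rfl⟩
    exact ⟨-a, K.neg_mem ha, -b, K.neg_mem hb, by ring⟩
  mul_mem' := by
    rintro _ _ ⟨a, ha, b, hb, rfl⟩ ⟨c, hc, d, hd, rfl⟩
    refine ⟨a * c + b * d * r ^ 2, by aesop, a * d + b * c, by aesop, by ring⟩
  inv_mem' := by
    rintro _ ⟨a, ha, b, hb, rfl⟩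
    by_cases hK : a + b * r ∈ K
    · exact ⟨_, K.inv_mem hK, 0, K.zero_mem, by simp⟩
    -- `(a + b r)(a - b r) = a² - b² r² ∈ K` is a nonzero norm unless `a + b r ∈ K`
    have hD : a ^ 2 - b ^ 2 * r ^ 2 ≠ 0 := by
      intro hD
      rcases mul_eq_zero.mp (show (a + b * r) * (a - b * r) = 0 by linear_combination hD)
        with h | h
      · exact hK (h ▸ K.zero_mem)
      · exact hK (by rw [show a + b * r = a + a by linear_combination -h]; exact K.add_mem ha ha)
    have hDK : (a ^ 2 - b ^ 2 * r ^ 2)⁻¹ ∈ K := by aesop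
    refine ⟨a * (a ^ 2 - b ^ 2 * r ^ 2)⁻¹, K.mul_mem ha hDK, -b * (a ^ 2 - b ^ 2 * r ^ 2)⁻¹,
      K.mul_mem (K.neg_mem hb) hDK, ?_⟩
    refine inv_eq_of_mul_eq_one_right ?_
    field_simp
    ring

variable {K : Subfield F} {r : F}

theorem le_quadExt (hr : r ^ 2 ∈ K) : K ≤ K.quadExt r hr :=
  fun x hx => ⟨x, hx, 0, K.zero_mem, by simp⟩

theorem self_mem_quadExt (hr : r ^ 2 ∈ K) : r ∈ K.quadExt r hr :=
  ⟨0, K.zero_mem, 1, K.one_mem, by simp⟩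

theorem eq_zero_of_add_mul_eq_zero (hr : r ∉ K) {x y : F} (hx : x ∈ K) (hy : y ∈ K)
    (h : x + y * r = 0) : x = 0 ∧ y = 0 := by
  obtain rfl : y = 0 := by
    by_contra hy0
    exact hr (by rw [show r = -x / y by field_simp; linear_combination h]; aesop)
  simpa using h

end Subfield

open Subfield

noncomputable def sqrtTower : List ℕ → Subfield ℝ
  | [] => (Rat.castHom ℝ).fieldRange
  | q :: L => (sqrtTower L).quadExt √q (by rw [Real.sq_sqrt q.cast_nonneg]; exact natCast_mem _ q)

theorem sqrt_mem_sqrtTower_of_mem {L : List ℕ} {q : ℕ} (hq : q ∈ L) : √q ∈ sqrtTower L := by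
  induction L with
  | nil => simp at hq
  | cons q' L ih =>
    rcases List.mem_cons.mp hq with rfl | hq
    · exact self_mem_quadExt _
    · exact le_quadExt _ (ih hq)

theorem sqrt_mem_sqrtTower {L : List ℕ} {s : ℕ} (hs : ∀ p, p.Prime → p ∣ s → p ∈ L) :
    √s ∈ sqrtTower L := by
  induction s using induction_on_primes with
  | zero => simp
  | one => simp
  | prime_mul p a hp ih =>
    rw [Nat.cast_mul, Real.sqrt_mul p.cast_nonneg]
    exact mul_mem (sqrt_mem_sqrtTower_of_mem (hs p hp (dvd_mul_right p a)))
      (ih fun p' hp' hpa => hs p' hp' (dvd_mul_of_dvd_right hpa p))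

theorem not_odd_factorization_of_isSquare {s : ℕ} (hs : IsSquare s) (p : ℕ) :
    ¬ Odd (s.factorization p) := by
  obtain ⟨m, rfl⟩ := hs
  rw [← sq, Nat.factorization_pow, Finsupp.smul_apply, smul_eq_mul, Nat.not_odd_iff_even]
  exact even_two_mul _

theorem sqrt_notMem_sqrtTower {p : ℕ} {L : List ℕ} (hL : ∀ q ∈ L, ¬ p ∣ q)
    {s : ℕ} (hs : Odd (s.factorization p)) : √s ∉ sqrtTower L := by
  induction L generalizing s with
  | nil =>
    rintro ⟨y, hy⟩
    refine not_odd_factorization_of_isSquare ?_ p hs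
    rw [← irrational_sqrt_natCast_iff.not_left]
    exact fun h => h ⟨y, hy⟩
  | cons q L ih =>
    have ih' : ∀ {s : ℕ}, Odd (s.factorization p) → √s ∉ sqrtTower L :=
      ih fun q' hq' => hL q' (List.mem_cons_of_mem q hq')
    rintro ⟨a, ha, b, hb, hab⟩
    by_cases hq : √q ∈ sqrtTower L
    · exact ih' hs (hab ▸ add_mem ha (mul_mem hb hq))
    have hsq : (s : ℝ) = a ^ 2 + b ^ 2 * q + 2 * a * b * √q := by
      rw [← Real.sq_sqrt s.cast_nonneg, hab]
      linear_combination b ^ 2 * Real.sq_sqrt q.cast_nonneg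
    rcases eq_or_ne (a * b) 0 with hab0 | hab0
    · rcases mul_eq_zero.mp hab0 with rfl | rfl
      · -- `√s = b √q`, so `√(s q) = b q`, and `q` does not change the parity at `p`
        have hs0 : s ≠ 0 := by rintro rfl; simp at hs
        have hq0 : q ≠ 0 := by rintro rfl; exact hL 0 List.mem_cons_self (dvd_zero p)
        refine ih' (s := s * q) ?_ ?_
        · rw [Nat.factorization_mul hs0 hq0, Finsupp.add_apply,
            Nat.factorization_eq_zero_of_not_dvd (hL q List.mem_cons_self), add_zero]
          exact hs
        · rw [Nat.cast_mul, Real.sqrt_mul s.cast_nonneg, hab, zero_add, mul_assoc,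
            Real.mul_self_sqrt q.cast_nonneg]
          exact mul_mem hb (natCast_mem _ q)
      · exact ih' hs (by simpa [hab] using ha)
    · refine hq ?_
      rw [show √q = (s - a ^ 2 - b ^ 2 * q) / (2 * (a * b)) by
        rw [eq_div_iff (mul_ne_zero two_ne_zero hab0)]; linear_combination -hsq]
      exact div_mem (sub_mem (sub_mem (natCast_mem _ s) (pow_mem ha 2))
        (mul_mem (pow_mem hb 2) (natCast_mem _ q))) (mul_mem (ofNat_mem _ 2) (mul_mem ha hb))

theorem sqrt_notMem_sqrtTower_of_prime {q : ℕ} (hq : q.Prime) {L : List ℕ}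
    (hL : ∀ p ∈ L, p.Prime) (hqL : q ∉ L) : √q ∉ sqrtTower L := by
  refine sqrt_notMem_sqrtTower (p := q) (s := q) (fun p hp hqp => hqL ?_)
    (by simp [hq.factorization_self])
  rwa [(Nat.prime_dvd_prime_iff_eq hq (hL p hp)).mp hqp]

theorem Squarefree.not_dvd_div_self {s q : ℕ} (hs : Squarefree s) (hq : q.Prime) (hqs : q ∣ s) :
    ¬ q ∣ s / q := fun h =>
  hq.not_isUnit (hs q (by simpa [Nat.mul_div_cancel' hqs] using mul_dvd_mul_left q h))

theorem Set.InjOn.div_filter_dvd {ι : Type*} {T : Finset ι} {f : ι → ℕ} (hf : Set.InjOn f T)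
    (q : ℕ) : Set.InjOn (f · / q) (T.filter (q ∣ f ·)) := by
  intro j hj k hk hjk
  obtain ⟨hjT, hqj⟩ := Finset.mem_filter.mp hj
  obtain ⟨hkT, hqk⟩ := Finset.mem_filter.mp hk
  refine hf hjT hkT ?_
  rw [← Nat.div_mul_cancel hqj, ← Nat.div_mul_cancel hqk]
  exact congrArg (· * q) hjk

theorem sum_sqrt_eq_zero_of_primes_mem {ι : Type*} {L : List ℕ} (hL : ∀ q ∈ L, q.Prime)
    (hnd : L.Nodup) {T : Finset ι} {f : ι → ℕ} (hf : Set.InjOn f T)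
    (hsq : ∀ i ∈ T, Squarefree (f i)) (hpr : ∀ i ∈ T, ∀ p, p.Prime → p ∣ f i → p ∈ L)
    {c : ι → ℚ} (h : ∑ i ∈ T, (c i : ℝ) * √(f i) = 0) : ∀ i ∈ T, c i = 0 := by
  induction L generalizing T f c with
  | nil =>
    intro i hi
    have hf1 : ∀ j ∈ T, f j = 1 := fun j hj =>
      Nat.eq_one_iff_not_exists_prime_dvd.mpr fun p hp hpj => by simpa using hpr j hj p hp hpj
    have hT : T = {i} := Finset.eq_singleton_iff_unique_mem.mpr
      ⟨hi, fun j hj => hf hj hi ((hf1 j hj).trans (hf1 i hi).symm)⟩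
    simpa [hT, hf1 i hi] using h
  | cons q L ih =>
    obtain ⟨hq, hL⟩ := List.forall_mem_cons.mp hL
    obtain ⟨hqL, hnd⟩ := List.nodup_cons.mp hnd
    -- Split `T` according to whether `q ∣ f i`; the relation becomes `x + y √q = 0` with `x, y`
    -- in the smaller tower, which does not contain `√q`.
    set T₁ := T.filter (q ∣ f ·)
    set T₀ := T.filter (¬ q ∣ f ·)
    have hpr₀ : ∀ i ∈ T₀, ∀ p, p.Prime → p ∣ f i → p ∈ L := by
      intro i hi p hp hpi
      obtain ⟨hiT, hqi⟩ := Finset.mem_filter.mp hi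
      exact (List.mem_cons.mp (hpr i hiT p hp hpi)).resolve_left (by rintro rfl; exact hqi hpi)
    have hpr₁ : ∀ i ∈ T₁, ∀ p, p.Prime → p ∣ f i / q → p ∈ L := by
      intro i hi p hp hpi
      obtain ⟨hiT, hqi⟩ := Finset.mem_filter.mp hi
      refine (List.mem_cons.mp (hpr i hiT p hp (hpi.trans (Nat.div_dvd_of_dvd hqi)))).resolve_left
        fun hpq => (hsq i hiT).not_dvd_div_self hq hqi (hpq ▸ hpi)
    set x := ∑ i ∈ T₀, (c i : ℝ) * √(f i)
    set y := ∑ i ∈ T₁, (c i : ℝ) * √(f i / q : ℕ)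
    have hx : x ∈ sqrtTower L :=
      sum_mem fun i hi => mul_mem (SubfieldClass.ratCast_mem _ _) (sqrt_mem_sqrtTower (hpr₀ i hi))
    have hy : y ∈ sqrtTower L :=
      sum_mem fun i hi => mul_mem (SubfieldClass.ratCast_mem _ _) (sqrt_mem_sqrtTower (hpr₁ i hi))
    have hxy : x + y * √q = 0 := by
      rw [← h, ← Finset.sum_filter_not_add_sum_filter T (q ∣ f ·), Finset.sum_mul]
      congr 1
      refine Finset.sum_congr rfl fun i hi => ?_
      rw [mul_assoc, ← Real.sqrt_mul (Nat.cast_nonneg _), ← Nat.cast_mul,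
        Nat.div_mul_cancel (Finset.mem_filter.mp hi).2]
    obtain ⟨hx0, hy0⟩ :=
      eq_zero_of_add_mul_eq_zero (sqrt_notMem_sqrtTower_of_prime hq hL hqL) hx hy hxy
    intro i hi
    by_cases hqi : q ∣ f i
    · refine ih hL hnd (T := T₁) (f := (f · / q)) (hf.div_filter_dvd q) ?_ hpr₁ hy0 i
        (Finset.mem_filter.mpr ⟨hi, hqi⟩)
      intro j hj
      obtain ⟨hjT, hqj⟩ := Finset.mem_filter.mp hj
      exact (hsq j hjT).squarefree_of_dvd (Nat.div_dvd_of_dvd hqj)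
    · exact ih hL hnd (hf.mono (Finset.filter_subset _ T))
        (fun j hj => hsq j (Finset.mem_filter.mp hj).1) hpr₀ hx0 i
        (Finset.mem_filter.mpr ⟨hi, hqi⟩)

theorem sum_sqrt_eq_zero_of_squarefree {ι : Type*} {T : Finset ι} {f : ι → ℕ}
    (hf : Set.InjOn f T) (hsq : ∀ i ∈ T, Squarefree (f i)) {c : ι → ℚ}
    (h : ∑ i ∈ T, (c i : ℝ) * √(f i) = 0) : ∀ i ∈ T, c i = 0 :=
  sum_sqrt_eq_zero_of_primes_mem (L := (∏ i ∈ T, f i).primeFactors.toList)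
    (fun _ hp => Nat.prime_of_mem_primeFactors (Finset.mem_toList.mp hp))
    (Finset.nodup_toList _) hf hsq
    (fun _ hi _ hp hpi => Finset.mem_toList.mpr <| Nat.mem_primeFactors.mpr
      ⟨hp, hpi.trans (Finset.dvd_prod_of_mem f hi),
        Finset.prod_ne_zero_iff.mpr fun j hj => (hsq j hj).ne_zero⟩) h

/-- If `b² a > N²` then `a b > N`, so `(b + 1)² a` exceeds `b² a` by more than `2 N`. -/
theorem eq_of_sq_mul_mem_Ioc {N a b c : ℕ} (hb : b ^ 2 * a ∈ Set.Ioc (N ^ 2) (N ^ 2 + 2 * N))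
    (hc : c ^ 2 * a ∈ Set.Ioc (N ^ 2) (N ^ 2 + 2 * N)) : b = c := by
  wlog hbc : b ≤ c generalizing b c
  · exact (this hc hb (le_of_not_ge hbc)).symm
  refine hbc.antisymm (not_lt.mp fun hlt => ?_)
  obtain ⟨hb₁, -⟩ := hb
  obtain ⟨-, hc₂⟩ := hc
  have ha : 1 ≤ a := Nat.one_le_iff_ne_zero.mpr (by rintro rfl; simp at hb₁)
  have hab : N < a * b := by
    refine lt_of_pow_lt_pow_left₀ 2 (Nat.zero_le _) ?_
    calc N ^ 2 < b ^ 2 * a := hb₁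
      _ ≤ (a * b) ^ 2 := by nlinarith
  have : (b + 1) ^ 2 * a ≤ c ^ 2 * a := Nat.mul_le_mul_right a (Nat.pow_le_pow_left hlt 2)
  nlinarith

theorem sum_sqrt_eq_zero_of_mem_Ioc {ι : Type*} {T : Finset ι} {g : ι → ℕ} {N : ℕ}
    (hg : Set.InjOn g T) (hwin : ∀ i ∈ T, g i ∈ Set.Ioc (N ^ 2) (N ^ 2 + 2 * N)) {c : ι → ℚ}
    (h : ∑ i ∈ T, (c i : ℝ) * √(g i) = 0) : ∀ i ∈ T, c i = 0 := by
  choose f a hafg hf using fun i => Nat.sq_mul_squarefree (g i)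
  have hsqrt : ∀ i, √(g i) = a i * √(f i) := fun i => by
    rw [← hafg i, Nat.cast_mul, Real.sqrt_mul (by positivity), Nat.cast_pow,
      Real.sqrt_sq (Nat.cast_nonneg _)]
  have hfinj : Set.InjOn f T := by
    intro i hi j hj hij
    have hwi := hwin i hi
    have hwj := hwin j hj
    rw [← hafg i, hij] at hwi
    rw [← hafg j] at hwj
    exact hg hi hj (by rw [← hafg i, ← hafg j, hij, eq_of_sq_mul_mem_Ioc hwi hwj])
  have hca := sum_sqrt_eq_zero_of_squarefree (c := fun i => c i * a i) hfinj (fun i _ => hf i)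
    (by simpa [hsqrt, mul_assoc] using h)
  intro i hi
  have ha : a i ≠ 0 := by
    rintro hai
    have := (hwin i hi).1
    rw [← hafg i, hai] at this
    simp at this
  simpa [ha] using hca i hi

/-- The squared length `n⁸ + ((j + 1) n - i)²` of the edge `u_i v_{j+1}`. -/
def edgeSq (n i j : ℕ) : ℕ := n ^ 8 + ((j + 1) * n - i) ^ 2

theorem norm_uPt_sub_vPt {n i : ℕ} (hi : i < n) (j : ℕ) :
    ‖uPt i - vPt n (j + 1)‖ = √(edgeSq n i j) := by
  have hle : i ≤ (j + 1) * n := hi.le.trans (Nat.le_mul_of_pos_left n j.succ_pos)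
  rw [EuclideanSpace.norm_eq, Fin.sum_univ_two, edgeSq]
  simp only [uPt, vPt, mk2, PiLp.sub_apply, WithLp.equiv_symm_apply, Matrix.cons_val_zero,
    Matrix.cons_val_one, Real.norm_eq_abs, sq_abs]
  push_cast [Nat.cast_sub hle]
  ring_nf

theorem matchWeight_eq_sum_sqrt_edgeSq (n : ℕ) (σ : Equiv.Perm (Fin n)) :
    matchWeight n σ = ∑ i : Fin n, √(edgeSq n i (σ i)) :=
  Finset.sum_congr rfl fun i _ => norm_uPt_sub_vPt i.isLt _

theorem one_le_sub_le_sq {n i j : ℕ} (hi : i < n) (hj : j < n) :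
    1 ≤ (j + 1) * n - i ∧ (j + 1) * n - i ≤ n ^ 2 := by
  have hn : n ≤ (j + 1) * n := Nat.le_mul_of_pos_left n j.succ_pos
  refine ⟨Nat.sub_pos_of_lt (hi.trans_le hn), (Nat.sub_le _ _).trans ?_⟩
  rw [sq]
  exact Nat.mul_le_mul_right n hj

theorem edgeSq_mem_Icc {n i j : ℕ} (hi : i < n) (hj : j < n) :
    edgeSq n i j ∈ Set.Icc (n ^ 8 + 1) (n ^ 8 + n ^ 4) := by
  obtain ⟨h₁, h₂⟩ := one_le_sub_le_sq hi hj
  constructor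
  · exact Nat.add_le_add_left (Nat.one_le_pow _ _ h₁) _
  · calc edgeSq n i j ≤ n ^ 8 + (n ^ 2) ^ 2 := Nat.add_le_add_left (Nat.pow_le_pow_left h₂ 2) _
      _ = n ^ 8 + n ^ 4 := by ring

theorem edgeSq_injective {n i j i' j' : ℕ} (hi : i < n) (hi' : i' < n)
    (h : edgeSq n i j = edgeSq n i' j') : i = i' ∧ j = j' := by
  have hd := Nat.pow_left_injective two_ne_zero (Nat.add_left_cancel h)
  have hn : n ≤ (j + 1) * n := Nat.le_mul_of_pos_left n j.succ_pos
  have hn' : n ≤ (j' + 1) * n := Nat.le_mul_of_pos_left n j'.succ_pos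
  have hjj : (j + 1) * n + i' = (j' + 1) * n + i := by omega
  have hj : j = j' := by
    rcases lt_trichotomy j j' with hlt | heq | hlt
    · nlinarith
    · exact heq
    · nlinarith
  subst hj
  omega

theorem matchWeight_eq_sum_prod (n : ℕ) (σ : Equiv.Perm (Fin n)) :
    matchWeight n σ =
      ∑ e : Fin n × Fin n, (if σ e.1 = e.2 then 1 else 0 : ℝ) * √(edgeSq n e.1 e.2) := by
  simp [matchWeight_eq_sum_sqrt_edgeSq, Fintype.sum_prod_type]

theorem matchWeight_injective (n : ℕ) : Function.Injective (matchWeight n) := by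
  intro σ τ h
  have hwin : ∀ e ∈ (Finset.univ : Finset (Fin n × Fin n)), edgeSq n e.1 e.2 ∈
      Set.Ioc ((n ^ 4) ^ 2) ((n ^ 4) ^ 2 + 2 * n ^ 4) := by
    intro e _
    obtain ⟨h₁, h₂⟩ := edgeSq_mem_Icc e.1.isLt e.2.isLt
    rw [← pow_mul]
    constructor <;> norm_num <;> omega
  have hinj : Function.Injective fun e : Fin n × Fin n => edgeSq n e.1 e.2 := fun e e' he => by
    obtain ⟨h₁, h₂⟩ := edgeSq_injective e.1.isLt e'.1.isLt he
    exact Prod.ext (Fin.ext h₁) (Fin.ext h₂)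
  have hc := sum_sqrt_eq_zero_of_mem_Ioc hinj.injOn hwin
    (c := fun e => (if σ e.1 = e.2 then 1 else 0) - (if τ e.1 = e.2 then 1 else 0))
    (by
      rw [← sub_eq_zero, matchWeight_eq_sum_prod, matchWeight_eq_sum_prod,
        ← Finset.sum_sub_distrib] at h
      rw [← h]
      refine Finset.sum_congr rfl fun e _ => ?_
      split_ifs <;> simp)
  refine Equiv.ext fun i => by_contra fun hne => ?_
  simpa [Ne.symm hne] using hc (i, σ i) (Finset.mem_univ _)

theorem sqrt_edgeSq_mem_Icc {n i j : ℕ} (hi : i < n) (hj : j < n) :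
    √(edgeSq n i j) ∈ Set.Icc ((n : ℝ) ^ 4) ((n : ℝ) ^ 4 + 1 / 2) := by
  obtain ⟨h₁, h₂⟩ := edgeSq_mem_Icc hi hj
  have h₁' : ((n ^ 8 + 1 : ℕ) : ℝ) ≤ edgeSq n i j := Nat.cast_le.mpr h₁
  have h₂' : (edgeSq n i j : ℝ) ≤ (n ^ 8 + n ^ 4 : ℕ) := Nat.cast_le.mpr h₂
  push_cast at h₁' h₂'
  constructor
  · rw [Real.le_sqrt (by positivity) (Nat.cast_nonneg _)]
    linarith
  · rw [Real.sqrt_le_iff]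
    constructor
    · positivity
    · nlinarith

theorem matchWeight_mem_Icc (n : ℕ) (σ : Equiv.Perm (Fin n)) :
    matchWeight n σ ∈ Set.Icc ((n : ℝ) ^ 5) ((n : ℝ) ^ 5 + n / 2) := by
  have hconst : ∀ c : ℝ, ∑ _i : Fin n, c = n * c := fun c => by simp
  rw [matchWeight_eq_sum_sqrt_edgeSq]
  constructor
  · calc (n : ℝ) ^ 5 = ∑ _i : Fin n, (n : ℝ) ^ 4 := by rw [hconst]; ring
      _ ≤ _ := Finset.sum_le_sum fun i _ => (sqrt_edgeSq_mem_Icc i.isLt (σ i).isLt).1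
  · calc _ ≤ ∑ _i : Fin n, ((n : ℝ) ^ 4 + 1 / 2) :=
          Finset.sum_le_sum fun i _ => (sqrt_edgeSq_mem_Icc i.isLt (σ i).isLt).2
      _ = (n : ℝ) ^ 5 + n / 2 := by rw [hconst]; ring

theorem cast_min_floor_mem_Icc {t : ℝ} {m : ℕ} (ht : t ∈ Set.Icc 0 ((m : ℝ) + 1)) :
    t ∈ Set.Icc ((min ⌊t⌋₊ m : ℕ) : ℝ) ((min ⌊t⌋₊ m : ℕ) + 1) := by
  refine ⟨(Nat.cast_le.mpr (min_le_left _ _)).trans (Nat.floor_le ht.1), ?_⟩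
  rw [Nat.cast_min, ← min_add_add_right]
  exact le_min (Nat.lt_floor_add_one t).le ht.2

/-- Pigeonhole: `k` points of `[0, k - 1]` fall into the `k - 1` unit intervals `[j, j + 1]`. -/
theorem exists_ne_abs_sub_le_one {α : Type*} [Fintype α] (hα : 1 < Fintype.card α)
    {t : α → ℝ} (ht : ∀ x, t x ∈ Set.Icc 0 ((Fintype.card α : ℝ) - 1)) :
    ∃ x y, x ≠ y ∧ |t x - t y| ≤ 1 := by
  set k := Fintype.card α
  have ht' : ∀ x, t x ∈ Set.Icc 0 (((k - 2 : ℕ) : ℝ) + 1) := fun x => by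
    rw [Nat.cast_sub hα, Nat.cast_two]
    convert ht x using 2
    ring
  obtain ⟨x, -, y, -, hxy, hb⟩ := Finset.exists_ne_map_eq_of_card_lt_of_maps_to
    (s := Finset.univ) (t := Finset.range (k - 1)) (f := fun x => min ⌊t x⌋₊ (k - 2))
    (by simp only [Finset.card_range, Finset.card_univ]; omega)
    (fun x _ => Finset.mem_range.mpr ((min_le_right _ _).trans_lt (by omega)))
  obtain ⟨hx₁, hx₂⟩ := cast_min_floor_mem_Icc (ht' x)
  obtain ⟨hy₁, hy₂⟩ := cast_min_floor_mem_Icc (ht' y)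
  rw [hb] at hx₁ hx₂
  exact ⟨x, y, hxy, abs_sub_le_iff.mpr ⟨by linarith, by linarith⟩⟩

theorem exists_ne_abs_sub_le_of_mem_Icc {α : Type*} [Fintype α] (hα : 1 < Fintype.card α)
    {f : α → ℝ} {a ℓ : ℝ} (hℓ : 0 < ℓ) (hf : ∀ x, f x ∈ Set.Icc a (a + ℓ)) :
    ∃ x y, x ≠ y ∧ |f x - f y| ≤ ℓ / (Fintype.card α - 1) := by
  have hk : (0 : ℝ) < Fintype.card α - 1 := by
    rw [sub_pos, Nat.one_lt_cast]
    exact hα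
  set ε := ℓ / (Fintype.card α - 1)
  have hε : 0 < ε := div_pos hℓ hk
  obtain ⟨x, y, hxy, h⟩ := exists_ne_abs_sub_le_one hα (t := fun x => (f x - a) / ε) fun x => by
    constructor
    · exact div_nonneg (sub_nonneg.mpr (hf x).1) hε.le
    · rw [div_le_iff₀ hε, mul_div_cancel₀ ℓ hk.ne']
      linarith [(hf x).2]
  refine ⟨x, y, hxy, ?_⟩
  rwa [← sub_div, sub_sub_sub_cancel_right, abs_div, abs_of_pos hε, div_le_one hε] at h

theorem half_div_factorial_sub_one_le {n : ℕ} (hn : 2 ≤ n) :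
    (n / 2 : ℝ) / ((n ! : ℕ) - 1) ≤ 1 / ((n - 1)! : ℕ) := by
  have hfac : (n ! : ℝ) = n * (n - 1)! := by
    exact_mod_cast (Nat.mul_factorial_pred (by omega)).symm
  have h2 : (2 : ℝ) ≤ n ! := by exact_mod_cast (Nat.one_lt_factorial.mpr hn : 1 < n !)
  have hpos : (0 : ℝ) < (n - 1)! := by exact_mod_cast Nat.factorial_pos _
  rw [div_le_div_iff₀ (by linarith) hpos]
  nlinarith

/-- In Construction 1 with `n ≥ 2`, there are two distinct perfect matchings whose weights
differ by a positive amount of at most `1/(n-1)!`. -/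
theorem stmt_7 (n : ℕ) (hn : 2 ≤ n) :
    ∃ σ τ : Equiv.Perm (Fin n), σ ≠ τ ∧
      0 < |matchWeight n σ - matchWeight n τ| ∧
      |matchWeight n σ - matchWeight n τ| ≤ 1 / (Nat.factorial (n - 1) : ℝ) := by
  have hcard : Fintype.card (Equiv.Perm (Fin n)) = n ! := by
    rw [Fintype.card_perm, Fintype.card_fin]
  obtain ⟨σ, τ, hne, hle⟩ := exists_ne_abs_sub_le_of_mem_Icc
    (hcard ▸ Nat.one_lt_factorial.mpr hn) (by positivity : (0 : ℝ) < n / 2) (matchWeight_mem_Icc n)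
  rw [hcard] at hle
  exact ⟨σ, τ, hne, abs_pos.mpr (sub_ne_zero.mpr ((matchWeight_injective n).ne hne)),
    hle.trans (half_div_factorial_sub_one_le hn)⟩
end

section
/- Let N, n be positive integers and let A and B be disjoint sets of n points each in the integer grid {0,…,N}² ⊆ ℝ², with no three points of A ∪ B collinear. Let w* be the minimum of w(M) = Σ_{a∈A} ‖a − M(a)‖ over all bijections M : A → B. If M₁ and M₂ are bijections A → B with w(M₁) < w* + 1/(8N⁴) and w(M₂) < w* + 1/(8N⁴), then no edge of M₁ crosses an edge of M₂: for all a₁, a₂ ∈ A with a₁ ≠ a₂ and M₁(a₁) ≠ M₂(a₂), the open segments from a₁ to M₁(a₁) and from a₂ to M₂(a₂) are disjoint. In particular, the union of all near-minimum weight perfect matchings forms a planar graph (it has a straight-line drawing without crossings). -/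
open scoped BigOperators

attribute [local instance] Classical.propDecidable

/-- `p` is a point of the integer grid `{0,…,N}² ⊆ ℝ²`. -/
def OnGrid (N : ℕ) (p : EuclideanSpace ℝ (Fin 2)) : Prop :=
  ∀ i : Fin 2, ∃ m : ℕ, m ≤ N ∧ p i = (m : ℝ)

/-- The Euclidean weight of a perfect matching (bijection) `M` between
two finite point sets `A` and `B` in the plane. -/
noncomputable def ewWeight (A B : Finset (EuclideanSpace ℝ (Fin 2)))
    (M : {x // x ∈ A} → {y // y ∈ B}) : ℝ :=
  ∑ a : {x // x ∈ A},
    ‖(a : EuclideanSpace ℝ (Fin 2)) - (M a : EuclideanSpace ℝ (Fin 2))‖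

/-!
If an edge `a₁b₁` of `M₁` crosses an edge `a₂b₂` of `M₂`, replace these two edges in the
multiset `M₁ + M₂` by `a₁b₂` and `a₂b₁`. Following the alternating cycles of `M₁⁻¹ ∘ M₂`, the
result still splits into two perfect matchings, so `2 w* ≤ w(M₁) + w(M₂) - δ`, where
`δ = |a₁b₁| + |a₂b₂| - |a₁b₂| - |a₂b₁|` is the gain of uncrossing. Near-minimality forces
`δ < 1/(4N⁴)`. On the other hand, if the crossing point is `a₁ + t(b₁ - a₁) = a₂ + s(b₂ - a₂)`
and `c = |det(b₁ - a₁, b₂ - a₂)|`, the four triangles spanned by one edge and an endpoint of the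
other have doubled areas `tc, (1-t)c, sc, (1-s)c`; these are nonzero integers, hence at least `1`,
and Lagrange's identity turns this into `δ ≥ 1/(4N⁴)`.
-/

open RealInnerProductSpace

local notation "E²" => EuclideanSpace ℝ (Fin 2)

namespace Equiv.Perm

variable {α : Type*}

lemma not_sameCycle_of_mapsTo [Finite α] {π : Perm α} {S : Set α} (hS : Set.MapsTo π S S)
    {x y : α} (hx : x ∈ S) (hy : y ∉ S) : ¬ π.SameCycle x y := by
  intro h
  obtain ⟨n, rfl⟩ := h.exists_nat_pow_eq
  rw [coe_pow] at hy
  exact hy (hS.iterate n hx)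

variable [DecidableEq α]

lemma not_sameCycle_mul_swap [Finite α] {σ : Perm α} {a₁ a₂ : α} (hne : a₁ ≠ a₂)
    (h : σ.SameCycle a₁ a₂) : ¬ (σ * swap a₁ a₂).SameCycle a₂ a₁ := by
  have hex : ∃ k, (σ ^ k) a₁ = a₂ := h.exists_nat_pow_eq
  set k := Nat.find hex
  have hk : (σ ^ k) a₁ = a₂ := Nat.find_spec hex
  have hmin : ∀ j < k, (σ ^ j) a₁ ≠ a₂ := fun j hj => Nat.find_min hex hj
  have hk₀ : 0 < k := Nat.pos_of_ne_zero fun h0 => hne (by simpa [h0] using hk)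
  have hret : ∀ j, 0 < j → j ≤ k → (σ ^ j) a₁ ≠ a₁ := by
    intro j hj₀ hjk he
    apply hmin (k - j) (by omega)
    rw [← he, ← mul_apply, ← pow_add, Nat.sub_add_cancel hjk]
    exact hk
  refine not_sameCycle_of_mapsTo (S := {x | ∃ j, 0 < j ∧ j ≤ k ∧ (σ ^ j) a₁ = x}) ?_
    ⟨k, hk₀, le_rfl, hk⟩ fun ⟨j, hj₀, hjk, hj⟩ => hret j hj₀ hjk hj
  rintro x ⟨j, hj₀, hjk, rfl⟩
  rw [mul_apply]
  rcases hjk.eq_or_lt with rfl | hlt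
  · rw [hk, swap_apply_right]
    exact ⟨1, one_pos, hk₀, pow_one σ ▸ rfl⟩
  · rw [swap_apply_of_ne_of_ne (hret j hj₀ hjk) (hmin j hlt)]
    exact ⟨j + 1, j.succ_pos, hlt, by rw [pow_succ', mul_apply]⟩

lemma exists_exchange_of_not_sameCycle {τ : Perm α} {a₁ a₂ : α} (h : ¬ τ.SameCycle a₂ a₁) :
    ∃ ρ ρ' : Perm α, (∀ a, a ≠ a₁ → a ≠ a₂ → s(ρ a, ρ' a) = s(a, τ a)) ∧
      s(ρ a₁, ρ' a₁) = s(τ a₁, τ a₂) ∧ s(ρ a₂, ρ' a₂) = s(a₁, a₂) := by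
  -- `ρ` follows `τ` on the cycle of `a₂` and fixes all other points, except that the images of
  -- `a₁` and `a₂` are exchanged; `ρ'` fixes the cycle of `a₂` and follows `τ` elsewhere.
  set κ := τ.cycleOf a₂
  have hκ : ∀ a, s(κ a, κ⁻¹ (τ a)) = s(a, τ a) := by
    intro a
    by_cases ha : τ.SameCycle a₂ a
    · rw [ha.cycleOf_apply, (inv_eq_iff_eq).2 (ha.cycleOf_apply).symm, Sym2.eq_swap]
    · have hτa : ¬ τ.SameCycle a₂ (τ a) := by rwa [sameCycle_apply_right]
      rw [cycleOf_apply_of_not_sameCycle ha,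
        (inv_eq_iff_eq).2 (cycleOf_apply_of_not_sameCycle hτa).symm]
  refine ⟨κ * swap a₁ a₂, κ⁻¹ * τ, fun a ha₁ ha₂ => ?_, ?_, ?_⟩
  · rw [mul_apply, mul_apply, swap_apply_of_ne_of_ne ha₁ ha₂, hκ]
  · rw [mul_apply, mul_apply, swap_apply_left, cycleOf_apply_self,
      (inv_eq_iff_eq).2 (cycleOf_apply_of_not_sameCycle (by rwa [sameCycle_apply_right])).symm,
      Sym2.eq_swap]
  · rw [mul_apply, mul_apply, swap_apply_right, cycleOf_apply_of_not_sameCycle h,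
      (inv_eq_iff_eq).2 (cycleOf_apply_self τ a₂).symm]

/-- With `σ = M₁⁻¹ ∘ M₂`, a perfect matching `M₁ ∘ ρ` takes the `M₁`-edge at `a` when `ρ a = a`
and the `M₂`-edge when `ρ a = σ a`: the two permutations split the edges of `M₁` and `M₂`, with
the edges `(a₁, M₁ a₁)`, `(a₂, M₂ a₂)` replaced by `(a₁, M₂ a₂)`, `(a₂, M₁ a₁)`. -/
lemma exists_exchange [Finite α] {σ : Perm α} {a₁ a₂ : α} (hne : a₁ ≠ a₂) :
    ∃ ρ ρ' : Perm α, (∀ a, a ≠ a₁ → a ≠ a₂ → s(ρ a, ρ' a) = s(a, σ a)) ∧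
      s(ρ a₁, ρ' a₁) = s(σ a₁, σ a₂) ∧ s(ρ a₂, ρ' a₂) = s(a₁, a₂) := by
  -- If `a₁` and `a₂` lie on one cycle of `σ`, composing with their transposition splits it.
  by_cases h : σ.SameCycle a₂ a₁
  · obtain ⟨ρ, ρ', hoff, h₁, h₂⟩ :=
      exists_exchange_of_not_sameCycle (not_sameCycle_mul_swap hne h.symm)
    refine ⟨ρ, ρ', fun a ha₁ ha₂ => ?_, ?_, h₂⟩
    · rw [hoff a ha₁ ha₂, mul_apply, swap_apply_of_ne_of_ne ha₁ ha₂]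
    · rw [h₁, mul_apply, mul_apply, swap_apply_left, swap_apply_right, Sym2.eq_swap]
  · exact exists_exchange_of_not_sameCycle h

end Equiv.Perm

lemma Fintype.sum_add_eq_sum_add_of_eq_off_pair {ι M : Type*} [Fintype ι] [DecidableEq ι]
    [AddCommMonoid M]
    {f g : ι → M} {i j : ι} (hij : i ≠ j) (h : ∀ k, k ≠ i → k ≠ j → f k = g k) :
    ∑ k, f k + (g i + g j) = ∑ k, g k + (f i + f j) := by
  have hj : j ∈ (Finset.univ.erase i) := Finset.mem_erase.2 ⟨hij.symm, Finset.mem_univ j⟩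
  rw [← Finset.add_sum_erase _ _ (Finset.mem_univ i), ← Finset.add_sum_erase _ _ hj,
    ← Finset.add_sum_erase _ g (Finset.mem_univ i), ← Finset.add_sum_erase _ g hj,
    Finset.sum_congr rfl fun k hk => h k (Finset.ne_of_mem_erase (Finset.mem_of_mem_erase hk))
      (Finset.ne_of_mem_erase hk)]
  abel

lemma add_eq_add_of_sym2_eq {α M : Type*} [AddCommMagma M] {x y x' y' : α}
    (h : s(x, y) = s(x', y')) (φ : α → M) : φ x + φ y = φ x' + φ y' := by
  rcases Sym2.eq_iff.1 h with ⟨rfl, rfl⟩ | ⟨rfl, rfl⟩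
  · rfl
  · exact add_comm _ _

lemma ewWeight_exchange {A B : Finset E²} {M₁ M₂ : {x // x ∈ A} → {y // y ∈ B}}
    (hM₁ : M₁.Bijective) (hM₂ : M₂.Bijective) {a₁ a₂ : {x // x ∈ A}} (hne : a₁ ≠ a₂) :
    ∃ M M' : {x // x ∈ A} → {y // y ∈ B}, M.Bijective ∧ M'.Bijective ∧
      ewWeight A B M + ewWeight A B M' + (‖(a₁ : E²) - M₁ a₁‖ + ‖(a₂ : E²) - M₂ a₂‖) =
        ewWeight A B M₁ + ewWeight A B M₂ + (‖(a₁ : E²) - M₂ a₂‖ + ‖(a₂ : E²) - M₁ a₁‖) := by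
  set σ : Equiv.Perm {x // x ∈ A} :=
    (Equiv.ofBijective M₂ hM₂).trans (Equiv.ofBijective M₁ hM₁).symm
  have hσ : ∀ a, M₁ (σ a) = M₂ a := fun a => (Equiv.ofBijective M₁ hM₁).apply_symm_apply _
  obtain ⟨ρ, ρ', hoff, h₁, h₂⟩ := σ.exists_exchange hne
  refine ⟨M₁ ∘ ρ, M₁ ∘ ρ', hM₁.comp ρ.bijective, hM₁.comp ρ'.bijective, ?_⟩
  let c (a a' : {x // x ∈ A}) : ℝ := ‖(a : E²) - M₁ a'‖
  have key := Fintype.sum_add_eq_sum_add_of_eq_off_pair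
    (f := fun a => c a (ρ a) + c a (ρ' a)) (g := fun a => c a a + c a (σ a)) hne
    fun a ha₁ ha₂ => add_eq_add_of_sym2_eq (hoff a ha₁ ha₂) (c a)
  simp only [add_eq_add_of_sym2_eq h₁ (c a₁), add_eq_add_of_sym2_eq h₂ (c a₂),
    Finset.sum_add_distrib, hσ, c] at key
  simp only [ewWeight, Function.comp_apply]
  linarith

def cross (u v : E²) : ℝ := u 0 * v 1 - u 1 * v 0

lemma norm_sq_fin_two (u : E²) : ‖u‖ ^ 2 = u 0 ^ 2 + u 1 ^ 2 := by
  simp [EuclideanSpace.real_norm_sq_eq, Fin.sum_univ_two]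

lemma inner_fin_two (u v : E²) : ⟪u, v⟫ = u 0 * v 0 + u 1 * v 1 := by
  simp [PiLp.inner_apply, Fin.sum_univ_two, mul_comm]

lemma inner_sq_add_cross_sq (u v : E²) : ⟪u, v⟫ ^ 2 + cross u v ^ 2 = ‖u‖ ^ 2 * ‖v‖ ^ 2 := by
  rw [inner_fin_two, norm_sq_fin_two, norm_sq_fin_two, cross]; ring

lemma cross_smul_add_smul (u v : E²) (p q : ℝ) :
    cross u (p • u + q • v) = q * cross u v ∧ cross v (p • u + q • v) = -(p * cross u v) := by
  constructor <;> · simp only [cross, PiLp.add_apply, PiLp.smul_apply, smul_eq_mul]; ring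

lemma norm_sq_smul_eq_of_cross_eq_zero {u w : E²} (h : cross u w = 0) :
    ‖u‖ ^ 2 • w = ⟪u, w⟫ • u := by
  ext i
  unfold cross at h
  fin_cases i
  · simp [norm_sq_fin_two, inner_fin_two]
    linear_combination (-u 1) * h
  · simp [norm_sq_fin_two, inner_fin_two]
    linear_combination u 0 * h

lemma collinear_of_cross_eq_zero {P Q R : E²} (h : cross (Q - P) (R - P) = 0) :
    Collinear ℝ ({P, Q, R} : Set E²) := by
  rcases eq_or_ne Q P with rfl | hQP
  · simpa using collinear_pair ℝ Q R
  have hperm : ({P, Q, R} : Set E²) = {R, P, Q} := by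
    ext; simp only [Set.mem_insert_iff, Set.mem_singleton_iff]; tauto
  rw [hperm]
  refine collinear_insert_of_mem_affineSpan_pair ?_
  have hu : ‖Q - P‖ ^ 2 ≠ 0 := by simpa [sub_eq_zero] using hQP
  convert AffineMap.lineMap_mem_affineSpan_pair (k := ℝ) (⟪Q - P, R - P⟫ / ‖Q - P‖ ^ 2) P Q using 1
  rw [AffineMap.lineMap_apply, vsub_eq_sub, vadd_eq_add, div_eq_inv_mul, mul_smul,
    ← norm_sq_smul_eq_of_cross_eq_zero h, smul_smul, inv_mul_cancel₀ hu, one_smul, sub_add_cancel]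

lemma OnGrid.exists_int {N : ℕ} {p : E²} (hp : OnGrid N p) (i : Fin 2) : ∃ z : ℤ, p i = z := by
  obtain ⟨m, -, hm⟩ := hp i
  exact ⟨m, by simp [hm]⟩

lemma one_le_abs_cross_of_not_collinear {N : ℕ} {P Q R : E²} (hP : OnGrid N P) (hQ : OnGrid N Q)
    (hR : OnGrid N R) (h : ¬ Collinear ℝ ({P, Q, R} : Set E²)) :
    1 ≤ |cross (Q - P) (R - P)| := by
  obtain ⟨p₀, hp₀⟩ := hP.exists_int 0
  obtain ⟨p₁, hp₁⟩ := hP.exists_int 1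
  obtain ⟨q₀, hq₀⟩ := hQ.exists_int 0
  obtain ⟨q₁, hq₁⟩ := hQ.exists_int 1
  obtain ⟨r₀, hr₀⟩ := hR.exists_int 0
  obtain ⟨r₁, hr₁⟩ := hR.exists_int 1
  have hint :
      cross (Q - P) (R - P) = (((q₀ - p₀) * (r₁ - p₁) - (q₁ - p₁) * (r₀ - p₀) : ℤ) : ℝ) := by
    simp [cross, hp₀, hp₁, hq₀, hq₁, hr₀, hr₁]
  have hne : (q₀ - p₀) * (r₁ - p₁) - (q₁ - p₁) * (r₀ - p₀) ≠ 0 := by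
    rintro h0
    exact h (collinear_of_cross_eq_zero (by simp [hint, h0]))
  rw [hint, ← Int.cast_abs]
  exact_mod_cast Int.one_le_abs hne

lemma OnGrid.norm_sub_sq_le {N : ℕ} {P Q : E²} (hP : OnGrid N P) (hQ : OnGrid N Q) :
    ‖Q - P‖ ^ 2 ≤ 2 * (N : ℝ) ^ 2 := by
  have coord : ∀ i, (Q i - P i) ^ 2 ≤ (N : ℝ) ^ 2 := by
    intro i
    obtain ⟨m, hmN, hm⟩ := hP i
    obtain ⟨k, hkN, hk⟩ := hQ i
    have : (m : ℝ) ≤ N := by exact_mod_cast hmN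
    have : (k : ℝ) ≤ N := by exact_mod_cast hkN
    rw [hm, hk]
    exact sq_le_sq' (by linarith [k.cast_nonneg (α := ℝ)]) (by linarith [m.cast_nonneg (α := ℝ)])
  rw [norm_sq_fin_two]
  simpa [two_mul] using add_le_add (coord 0) (coord 1)

lemma triangle_defect_smul_add_smul {F : Type*} [NormedAddCommGroup F]
    [InnerProductSpace ℝ F] (u v : F) {p q : ℝ} (hp₀ : 0 ≤ p) (hp₁ : p ≤ 1) (hq₀ : 0 ≤ q)
    (hq₁ : q ≤ 1) :
    p * q * (‖u‖ * ‖v‖ - ⟪u, v⟫) ≤ (p * ‖u‖ + q * ‖v‖ - ‖p • u + q • v‖) * (‖u‖ + ‖v‖) := by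
  set R := ‖p • u + q • v‖
  have hR₀ : 0 ≤ R := norm_nonneg _
  have hRP : R ≤ p * ‖u‖ + q * ‖v‖ := by
    refine (norm_add_le _ _).trans_eq ?_
    rw [norm_smul, norm_smul, Real.norm_of_nonneg hp₀, Real.norm_of_nonneg hq₀]
  have hR_sq : R ^ 2 = p ^ 2 * ‖u‖ ^ 2 + 2 * (p * q) * ⟪u, v⟫ + q ^ 2 * ‖v‖ ^ 2 := by
    rw [norm_add_sq_real, norm_smul, norm_smul, inner_smul_left, inner_smul_right,
      Real.norm_of_nonneg hp₀, Real.norm_of_nonneg hq₀]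
    simp only [conj_trivial]
    ring
  have hu := norm_nonneg u
  have hv := norm_nonneg v
  nlinarith [mul_le_mul_of_nonneg_left hp₁ hu, mul_le_mul_of_nonneg_left hq₁ hv,
    mul_nonneg (sub_nonneg.2 hRP) (sub_nonneg.2 hRP)]

lemma mul_add_le_eight_mul_pow_four {N : ℕ} (hN : 0 < N) {α β K W : ℝ} (hα : 0 ≤ α) (hβ : 0 ≤ β)
    (hαN : α ^ 2 ≤ 2 * (N : ℝ) ^ 2) (hβN : β ^ 2 ≤ 2 * (N : ℝ) ^ 2) (hK : 0 ≤ K) (hW : 0 ≤ W)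
    (hKW : K + W = 2 * (α * β)) (hKW4 : 4 ≤ K * W) :
    K * (α + β) ≤ 8 * (N : ℝ) ^ 4 := by
  have le_of_sq {x b : ℝ} (hx : 0 ≤ x) (hb : 0 ≤ b) (h : x ^ 2 ≤ b ^ 2) : x ≤ b :=
    (pow_le_pow_iff_left₀ hx hb two_ne_zero).1 h
  obtain rfl | hN2 : N = 1 ∨ 2 ≤ N := by omega
  -- For `N = 1` the bound `α, β ≤ N²` fails; instead `K + W ≤ 4 ≤ K * W` forces `K ≤ 2`.
  · norm_num at hαN hβN ⊢
    have hα2 : α ≤ 2 := le_of_sq hα zero_le_two (by linarith)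
    have hβ2 : β ≤ 2 := le_of_sq hβ zero_le_two (by linarith)
    have hK2 : K ≤ 2 := by nlinarith [sq_nonneg (α - β)]
    nlinarith
  · have hN2' : (2 : ℝ) ≤ N := by exact_mod_cast hN2
    have hN4 : 2 * (N : ℝ) ^ 2 ≤ ((N : ℝ) ^ 2) ^ 2 := by
      rw [sq ((N : ℝ) ^ 2)]
      exact mul_le_mul_of_nonneg_right (by nlinarith) (by positivity)
    have hαN2 : α ≤ (N : ℝ) ^ 2 := le_of_sq hα (by positivity) (hαN.trans hN4)
    have hβN2 : β ≤ (N : ℝ) ^ 2 := le_of_sq hβ (by positivity) (hβN.trans hN4)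
    have hK4 : K ≤ 4 * (N : ℝ) ^ 2 := by nlinarith [sq_nonneg (α - β)]
    nlinarith

lemma one_div_le_uncrossing_gain {N : ℕ} (hN : 0 < N) {u v : E²} {t s : ℝ}
    (hu : ‖u‖ ^ 2 ≤ 2 * (N : ℝ) ^ 2) (hv : ‖v‖ ^ 2 ≤ 2 * (N : ℝ) ^ 2)
    (h₁ : 1 ≤ t * |cross u v|) (h₂ : 1 ≤ (1 - t) * |cross u v|)
    (h₃ : 1 ≤ s * |cross u v|) (h₄ : 1 ≤ (1 - s) * |cross u v|) :
    1 / (4 * (N : ℝ) ^ 4) ≤ ‖u‖ + ‖v‖ - ‖t • u + (1 - s) • v‖ - ‖(1 - t) • u + s • v‖ := by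
  -- With `K = ‖u‖‖v‖ + ⟪u, v⟫`, `W = ‖u‖‖v‖ - ⟪u, v⟫` and `σ = t(1-s) + (1-t)s`:
  -- `2 ≤ σ c² = σ W K ≤ D (‖u‖ + ‖v‖) K ≤ 8 N⁴ D`.
  set c := |cross u v|
  set D := ‖u‖ + ‖v‖ - ‖t • u + (1 - s) • v‖ - ‖(1 - t) • u + s • v‖
  have hc : 2 ≤ c := by linarith
  have ht₀ : 0 ≤ t := by nlinarith
  have ht₁ : t ≤ 1 := by nlinarith
  have hs₀ : 0 ≤ s := by nlinarith
  have hs₁ : s ≤ 1 := by nlinarith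
  have hD : (t * (1 - s) + (1 - t) * s) * (‖u‖ * ‖v‖ - ⟪u, v⟫) ≤ D * (‖u‖ + ‖v‖) := by
    have := triangle_defect_smul_add_smul u v ht₀ ht₁ (sub_nonneg.2 hs₁) (by linarith)
    have := triangle_defect_smul_add_smul u v (sub_nonneg.2 ht₁) (by linarith) hs₀ hs₁
    linarith
  have hlagrange : (‖u‖ * ‖v‖ + ⟪u, v⟫) * (‖u‖ * ‖v‖ - ⟪u, v⟫) = c ^ 2 := by
    rw [sq_abs]; linear_combination -inner_sq_add_cross_sq u v
  have hCS := abs_real_inner_le_norm u v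
  have hK : 0 ≤ ‖u‖ * ‖v‖ + ⟪u, v⟫ := by linarith [neg_abs_le ⟪u, v⟫]
  have hW : 0 ≤ ‖u‖ * ‖v‖ - ⟪u, v⟫ := by linarith [le_abs_self ⟪u, v⟫]
  have hprod := mul_add_le_eight_mul_pow_four hN (norm_nonneg u) (norm_nonneg v) hu hv hK hW
    (by ring) (by nlinarith)
  have hareas : 2 ≤ (t * (1 - s) + (1 - t) * s) * c ^ 2 := by
    nlinarith [one_le_mul_of_one_le_of_one_le h₁ h₄, one_le_mul_of_one_le_of_one_le h₂ h₃]
  have key : 2 ≤ D * ((‖u‖ * ‖v‖ + ⟪u, v⟫) * (‖u‖ + ‖v‖)) := by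
    rw [← hlagrange] at hareas
    nlinarith [mul_le_mul_of_nonneg_left hD hK]
  have hD₀ : 0 ≤ D := by
    by_contra! h
    nlinarith [mul_nonneg hK (add_nonneg (norm_nonneg u) (norm_nonneg v))]
  rw [div_le_iff₀ (by positivity)]
  nlinarith [mul_le_mul_of_nonneg_left hprod hD₀]

lemma one_div_le_uncrossing_gain_of_openSegment {N : ℕ} (hN : 0 < N) {a₁ b₁ a₂ b₂ : E²}
    (ga₁ : OnGrid N a₁) (gb₁ : OnGrid N b₁) (ga₂ : OnGrid N a₂) (gb₂ : OnGrid N b₂)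
    (h₁ : ¬ Collinear ℝ ({a₂, b₂, a₁} : Set E²)) (h₂ : ¬ Collinear ℝ ({a₂, b₂, b₁} : Set E²))
    (h₃ : ¬ Collinear ℝ ({a₁, b₁, a₂} : Set E²)) (h₄ : ¬ Collinear ℝ ({a₁, b₁, b₂} : Set E²))
    (hX : (openSegment ℝ a₁ b₁ ∩ openSegment ℝ a₂ b₂).Nonempty) :
    1 / (4 * (N : ℝ) ^ 4) ≤ ‖a₁ - b₁‖ + ‖a₂ - b₂‖ - ‖a₁ - b₂‖ - ‖a₂ - b₁‖ := by
  obtain ⟨X, hX₁, hX₂⟩ := hX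
  rw [openSegment_eq_image'] at hX₁ hX₂
  obtain ⟨t, ⟨ht₀, ht₁⟩, rfl⟩ := hX₁
  obtain ⟨s, ⟨hs₀, hs₁⟩, hst⟩ := hX₂
  have e₁ : a₁ - a₂ = (-t) • (b₁ - a₁) + s • (b₂ - a₂) := by
    linear_combination (norm := module) -hst
  have e₂ : b₁ - a₂ = (1 - t) • (b₁ - a₁) + s • (b₂ - a₂) := by
    linear_combination (norm := module) -hst
  have e₃ : a₂ - a₁ = t • (b₁ - a₁) + (-s) • (b₂ - a₂) := by
    linear_combination (norm := module) hst
  have e₄ : b₂ - a₁ = t • (b₁ - a₁) + (1 - s) • (b₂ - a₂) := by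
    linear_combination (norm := module) hst
  have c₁ := one_le_abs_cross_of_not_collinear ga₂ gb₂ ga₁ h₁
  have c₂ := one_le_abs_cross_of_not_collinear ga₂ gb₂ gb₁ h₂
  have c₃ := one_le_abs_cross_of_not_collinear ga₁ gb₁ ga₂ h₃
  have c₄ := one_le_abs_cross_of_not_collinear ga₁ gb₁ gb₂ h₄
  rw [e₁, (cross_smul_add_smul _ _ _ _).2, abs_neg, abs_mul, abs_neg, abs_of_pos ht₀] at c₁
  rw [e₂, (cross_smul_add_smul _ _ _ _).2, abs_neg, abs_mul, abs_of_pos (sub_pos.2 ht₁)] at c₂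
  rw [e₃, (cross_smul_add_smul _ _ _ _).1, abs_mul, abs_neg, abs_of_pos hs₀] at c₃
  rw [e₄, (cross_smul_add_smul _ _ _ _).1, abs_mul, abs_of_pos (sub_pos.2 hs₁)] at c₄
  rw [norm_sub_rev a₁, norm_sub_rev a₂ b₂, norm_sub_rev a₁, norm_sub_rev a₂, e₂, e₄]
  exact one_div_le_uncrossing_gain hN (ga₁.norm_sub_sq_le gb₁) (ga₂.norm_sub_sq_le gb₂)
    c₁ c₂ c₃ c₄

theorem stmt_10_general (N : ℕ) (hN : 0 < N)
    (A B : Finset (EuclideanSpace ℝ (Fin 2)))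
    (hAB : Disjoint A B)
    (hgrid : ∀ p ∈ A ∪ B, OnGrid N p)
    (hcol : ∀ P ∈ A ∪ B, ∀ Q ∈ A ∪ B, ∀ R ∈ A ∪ B, P ≠ Q → P ≠ R → Q ≠ R →
      ¬ Collinear ℝ ({P, Q, R} : Set (EuclideanSpace ℝ (Fin 2))))
    (wstar : ℝ)
    (hwstar : IsLeast {w : ℝ | ∃ M : {x // x ∈ A} → {y // y ∈ B},
      Function.Bijective M ∧ ewWeight A B M = w} wstar)
    (M₁ M₂ : {x // x ∈ A} → {y // y ∈ B})
    (hM₁ : Function.Bijective M₁) (hM₂ : Function.Bijective M₂)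
    (hnear₁ : ewWeight A B M₁ < wstar + 1 / (8 * (N : ℝ) ^ 4))
    (hnear₂ : ewWeight A B M₂ < wstar + 1 / (8 * (N : ℝ) ^ 4)) :
    ∀ a₁ a₂ : {x // x ∈ A}, a₁ ≠ a₂ → M₁ a₁ ≠ M₂ a₂ →
      Disjoint
        (openSegment ℝ (a₁ : EuclideanSpace ℝ (Fin 2)) (M₁ a₁ : EuclideanSpace ℝ (Fin 2)))
        (openSegment ℝ (a₂ : EuclideanSpace ℝ (Fin 2)) (M₂ a₂ : EuclideanSpace ℝ (Fin 2))) := by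
  intro a₁ a₂ hne hbne
  rw [Set.disjoint_iff_inter_eq_empty, ← Set.not_nonempty_iff_eq_empty]
  intro hX
  have memA (a : {x // x ∈ A}) : (a : E²) ∈ A ∪ B := Finset.mem_union_left B a.2
  have memB (b : {y // y ∈ B}) : (b : E²) ∈ A ∪ B := Finset.mem_union_right A b.2
  have hAB' (a : {x // x ∈ A}) (b : {y // y ∈ B}) : (a : E²) ≠ b :=
    fun h => Finset.disjoint_left.1 hAB a.2 (h ▸ b.2)
  have ha : (a₁ : E²) ≠ a₂ := Subtype.coe_injective.ne hne
  have hb : (M₁ a₁ : E²) ≠ M₂ a₂ := Subtype.coe_injective.ne hbne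
  have hgain := one_div_le_uncrossing_gain_of_openSegment hN (hgrid _ (memA a₁))
    (hgrid _ (memB _)) (hgrid _ (memA a₂)) (hgrid _ (memB _))
    (hcol _ (memA a₂) _ (memB _) _ (memA a₁) (hAB' _ _) ha.symm (hAB' _ _).symm)
    (hcol _ (memA a₂) _ (memB _) _ (memB _) (hAB' _ _) (hAB' _ _) hb.symm)
    (hcol _ (memA a₁) _ (memB _) _ (memA a₂) (hAB' _ _) ha (hAB' _ _).symm)
    (hcol _ (memA a₁) _ (memB _) _ (memB _) (hAB' _ _) (hAB' _ _) hb) hX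
  obtain ⟨M, M', hM, hM', hw⟩ := ewWeight_exchange hM₁ hM₂ hne
  have hwM := hwstar.2 ⟨M, hM, rfl⟩
  have hwM' := hwstar.2 ⟨M', hM', rfl⟩
  have hhalf : 1 / (4 * (N : ℝ) ^ 4) = 2 * (1 / (8 * (N : ℝ) ^ 4)) := by ring
  linarith

/-- For disjoint `n`-point sets `A, B` on the grid `{0,…,N}²` with no three points of
`A ∪ B` collinear: if `M₁` and `M₂` are near-minimum weight perfect matchings (weight
`< w* + 1/(8N⁴)`), then no edge of `M₁` crosses an edge of `M₂`; hence the union of all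
near-minimum weight perfect matchings has a straight-line drawing without crossings. -/
theorem stmt_10 (N n : ℕ) (hN : 0 < N) (hn : 0 < n)
    (A B : Finset (EuclideanSpace ℝ (Fin 2)))
    (hAB : Disjoint A B) (hcardA : A.card = n) (hcardB : B.card = n)
    (hgrid : ∀ p ∈ A ∪ B, OnGrid N p)
    (hcol : ∀ P ∈ A ∪ B, ∀ Q ∈ A ∪ B, ∀ R ∈ A ∪ B, P ≠ Q → P ≠ R → Q ≠ R →
      ¬ Collinear ℝ ({P, Q, R} : Set (EuclideanSpace ℝ (Fin 2))))
    (wstar : ℝ)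
    (hwstar : IsLeast {w : ℝ | ∃ M : {x // x ∈ A} → {y // y ∈ B},
      Function.Bijective M ∧ ewWeight A B M = w} wstar)
    (M₁ M₂ : {x // x ∈ A} → {y // y ∈ B})
    (hM₁ : Function.Bijective M₁) (hM₂ : Function.Bijective M₂)
    (hnear₁ : ewWeight A B M₁ < wstar + 1 / (8 * (N : ℝ) ^ 4))
    (hnear₂ : ewWeight A B M₂ < wstar + 1 / (8 * (N : ℝ) ^ 4)) :
    ∀ a₁ a₂ : {x // x ∈ A}, a₁ ≠ a₂ → M₁ a₁ ≠ M₂ a₂ →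
      Disjoint
        (openSegment ℝ (a₁ : EuclideanSpace ℝ (Fin 2)) (M₁ a₁ : EuclideanSpace ℝ (Fin 2)))
        (openSegment ℝ (a₂ : EuclideanSpace ℝ (Fin 2)) (M₂ a₂ : EuclideanSpace ℝ (Fin 2))) :=
  stmt_10_general N hN A B hAB hgrid hcol wstar hwstar M₁ M₂ hM₁ hM₂ hnear₁ hnear₂
end
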